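/- arXiv:2212.02979 — 6 statements merged into one kernel-verified Lean document; each statement's English description precedes it below -/
import Mathlib

section
/- Let K₁, K₂ be proper cones in ℝⁿ and let S be an invertible linear map on ℝⁿ with S(K₁) ⊆ K₂. If a matrix A is K₁-semipositive, then B = S A S⁻¹ is K₂-semipositive. Conversely, if K₁ and K₂ are self-dual and C is K₂-semipositive, then there exists a K₁-semipositive matrix A such that C = (Sᵗ)⁻¹ A Sᵗ. -/
/-!
An invertible matrix `S` is an open map, so `S K₁ ⊆ K₂` gives `S K₁° ⊆ K₂°`; hence a witness
`x` of `K₁`-semipositivity of `A` yields the witness `S x` for `S A S⁻¹`. For the converse,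
`⟨Sᵀ y, x⟩ = ⟨y, S x⟩` shows that `Sᵀ` maps `K₂*` into `K₁*`, i.e. `K₂` into `K₁` when both cones
are self-dual, and the first part applied to `Sᵀ` produces `A = Sᵀ C (Sᵀ)⁻¹`.
-/

open Matrix

/-- The dual cone of a set in `ℝⁿ` (with the standard inner product). -/
def dualCone {n : ℕ} (K : Set (Fin n → ℝ)) : Set (Fin n → ℝ) :=
  {y | ∀ x ∈ K, 0 ≤ y ⬝ᵥ x}

/-- A proper cone in `ℝⁿ`: a topologically closed, pointed convex cone with
nonempty interior. -/
def IsProperCone {n : ℕ} (K : Set (Fin n → ℝ)) : Prop :=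
  IsClosed K ∧ (∀ x ∈ K, ∀ y ∈ K, x + y ∈ K) ∧
    (∀ (c : ℝ), 0 ≤ c → ∀ x ∈ K, c • x ∈ K) ∧
    (∀ x ∈ K, -x ∈ K → x = 0) ∧ (interior K).Nonempty

/-- `A` is `K`-semipositive: there is `x ∈ K°` with `Ax ∈ K°`. -/
def Semipositive {n : ℕ} (K : Set (Fin n → ℝ)) (A : Matrix (Fin n) (Fin n) ℝ) : Prop :=
  ∃ x ∈ interior K, A *ᵥ x ∈ interior K

lemma Matrix.mulVec_mem_interior_of_mapsTo {n : ℕ} {K₁ K₂ : Set (Fin n → ℝ)}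
    {S : Matrix (Fin n) (Fin n) ℝ} (hS : IsUnit S) (hmaps : ∀ x ∈ K₁, S *ᵥ x ∈ K₂)
    {x : Fin n → ℝ} (hx : x ∈ interior K₁) : S *ᵥ x ∈ interior K₂ := by
  have hopen : IsOpenMap (S *ᵥ ·) :=
    (Matrix.mulVecLin S).isOpenMap_of_finiteDimensional (mulVec_surjective_iff_isUnit.mpr hS)
  have himage : (S *ᵥ ·) '' K₁ ⊆ K₂ := by
    rintro _ ⟨y, hy, rfl⟩
    exact hmaps y hy
  exact interior_mono himage (hopen.image_interior_subset K₁ ⟨x, hx, rfl⟩)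

lemma Semipositive.conj {n : ℕ} {K₁ K₂ : Set (Fin n → ℝ)} {S A : Matrix (Fin n) (Fin n) ℝ}
    (hS : IsUnit S) (hmaps : ∀ x ∈ K₁, S *ᵥ x ∈ K₂) (hA : Semipositive K₁ A) :
    Semipositive K₂ (S * A * S⁻¹) := by
  obtain ⟨x, hx, hAx⟩ := hA
  have hdet : IsUnit S.det := (isUnit_iff_isUnit_det S).mp hS
  refine ⟨S *ᵥ x, mulVec_mem_interior_of_mapsTo hS hmaps hx, ?_⟩
  rw [mulVec_mulVec, nonsing_inv_mul_cancel_right _ _ hdet, ← mulVec_mulVec]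
  exact mulVec_mem_interior_of_mapsTo hS hmaps hAx

lemma Matrix.transpose_mulVec_mem_dualCone {n : ℕ} {K₁ K₂ : Set (Fin n → ℝ)}
    {S : Matrix (Fin n) (Fin n) ℝ} (hmaps : ∀ x ∈ K₁, S *ᵥ x ∈ K₂)
    {y : Fin n → ℝ} (hy : y ∈ dualCone K₂) : Sᵀ *ᵥ y ∈ dualCone K₁ := by
  intro x hx
  rw [mulVec_transpose, ← dotProduct_mulVec]
  exact hy _ (hmaps x hx)

theorem stmt_2_general {n : ℕ} (K₁ K₂ : Set (Fin n → ℝ))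
    (S : Matrix (Fin n) (Fin n) ℝ) (hSinv : IsUnit S) (hS : ∀ x ∈ K₁, S *ᵥ x ∈ K₂) :
    (∀ A : Matrix (Fin n) (Fin n) ℝ, Semipositive K₁ A → Semipositive K₂ (S * A * S⁻¹)) ∧
    (dualCone K₁ = K₁ → dualCone K₂ = K₂ →
      ∀ C : Matrix (Fin n) (Fin n) ℝ, Semipositive K₂ C →
        ∃ A : Matrix (Fin n) (Fin n) ℝ, Semipositive K₁ A ∧ C = (Sᵀ)⁻¹ * A * Sᵀ) := by
  refine ⟨fun A hA => hA.conj hSinv hS, fun hK₁ hK₂ C hC => ?_⟩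
  have hT : IsUnit Sᵀ := (isUnit_transpose S).mpr hSinv
  have hTdet : IsUnit Sᵀ.det := (isUnit_iff_isUnit_det Sᵀ).mp hT
  have hTmaps : ∀ y ∈ K₂, Sᵀ *ᵥ y ∈ K₁ := by
    intro y hy
    rw [← hK₂] at hy
    rw [← hK₁]
    exact transpose_mulVec_mem_dualCone hS hy
  refine ⟨Sᵀ * C * (Sᵀ)⁻¹, hC.conj hT hTmaps, ?_⟩
  rw [Matrix.mul_assoc, nonsing_inv_mul_cancel_right _ _ hTdet,
    nonsing_inv_mul_cancel_left _ _ hTdet]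

theorem stmt_2 {n : ℕ} (K₁ K₂ : Set (Fin n → ℝ))
    (hK₁ : IsProperCone K₁) (hK₂ : IsProperCone K₂)
    (S : Matrix (Fin n) (Fin n) ℝ) (hSinv : IsUnit S) (hS : ∀ x ∈ K₁, S *ᵥ x ∈ K₂) :
    (∀ A : Matrix (Fin n) (Fin n) ℝ, Semipositive K₁ A → Semipositive K₂ (S * A * S⁻¹)) ∧
    (dualCone K₁ = K₁ → dualCone K₂ = K₂ →
      ∀ C : Matrix (Fin n) (Fin n) ℝ, Semipositive K₂ C →
        ∃ A : Matrix (Fin n) (Fin n) ℝ, Semipositive K₁ A ∧ C = (Sᵀ)⁻¹ * A * Sᵀ) :=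
  stmt_2_general K₁ K₂ S hSinv hS
end

section
/- Let 𝓛_A : 𝒮² → 𝒮² be the Lyapunov operator 𝓛_A(X) = AX + XAᵗ for a fixed A ∈ M₂(ℝ). If 𝓛_A(CP₂) ⊆ CP₂, then A = αI for some scalar α ≥ 0, and hence 𝓛_A is a nonnegative scalar multiple of the identity map on 𝒮². -/
open Matrix

/-- The cone `CPₙ` of completely positive matrices, as a set of `n × n` matrices:
`A = B * Bᵀ` for some entrywise nonnegative (not necessarily square) matrix `B`. -/
def CPset (n : ℕ) : Set (Matrix (Fin n) (Fin n) ℝ) :=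
  {A | ∃ (m : ℕ) (B : Matrix (Fin n) (Fin m) ℝ), (∀ i j, 0 ≤ B i j) ∧ A = B * Bᵀ}

lemma cp_nonneg {X : Matrix (Fin 2) (Fin 2) ℝ} (hX : X ∈ CPset 2) (i j : Fin 2) :
    0 ≤ X i j := by
  obtain ⟨m, B, hB, rfl⟩ := hX
  rw [Matrix.mul_apply]
  exact Finset.sum_nonneg fun k _ => mul_nonneg (hB i k) (hB j k)

lemma cp_psd {X : Matrix (Fin 2) (Fin 2) ℝ} (hX : X ∈ CPset 2) (v : Fin 2 → ℝ) :
    0 ≤ v ⬝ᵥ X *ᵥ v := by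
  obtain ⟨m, B, hB, rfl⟩ := hX
  rw [← Matrix.mulVec_mulVec, Matrix.dotProduct_mulVec, ← Matrix.mulVec_transpose]
  exact Finset.sum_nonneg fun k _ => mul_self_nonneg _

lemma E00_mem : (!![1,0;0,0] : Matrix (Fin 2) (Fin 2) ℝ) ∈ CPset 2 := by
  refine ⟨1, !![1;0], ?_, ?_⟩
  · intro i j; fin_cases i <;> fin_cases j <;> norm_num
  · ext i j; fin_cases i <;> fin_cases j <;>
      simp [Matrix.mul_apply, Matrix.vecHead, Matrix.vecTail, Fin.sum_univ_one]

lemma E11_mem : (!![0,0;0,1] : Matrix (Fin 2) (Fin 2) ℝ) ∈ CPset 2 := by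
  refine ⟨1, !![0;1], ?_, ?_⟩
  · intro i j; fin_cases i <;> fin_cases j <;> norm_num
  · ext i j; fin_cases i <;> fin_cases j <;>
      simp [Matrix.mul_apply, Matrix.vecHead, Matrix.vecTail, Fin.sum_univ_one]

lemma J_mem : (!![1,1;1,1] : Matrix (Fin 2) (Fin 2) ℝ) ∈ CPset 2 := by
  refine ⟨1, !![1;1], ?_, ?_⟩
  · intro i j; fin_cases i <;> fin_cases j <;> norm_num
  · ext i j; fin_cases i <;> fin_cases j <;>
      simp [Matrix.mul_apply, Matrix.vecHead, Matrix.vecTail, Fin.sum_univ_one]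

theorem stmt_5 (A : Matrix (Fin 2) (Fin 2) ℝ)
    (h : ∀ X ∈ CPset 2, A * X + X * Aᵀ ∈ CPset 2) :
    ∃ α : ℝ, 0 ≤ α ∧ A = α • (1 : Matrix (Fin 2) (Fin 2) ℝ) ∧
      ∀ X : Matrix (Fin 2) (Fin 2) ℝ, X.IsSymm → A * X + X * Aᵀ = (2 * α) • X := by
  set a := A 0 0 with ha'
  set b := A 1 1 with hb'
  set c := A 1 0 with hc'
  set d := A 0 1 with hd'
  have h1 := h _ E00_mem
  have h2 := h _ E11_mem
  have h3 := h _ J_mem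
  -- nonnegativity of a, b
  have ha : 0 ≤ a := by
    have := cp_nonneg h1 0 0
    simpa [Matrix.add_apply, Matrix.mul_apply, Matrix.vecMul, dotProduct,
      Matrix.transpose_apply, Fin.sum_univ_two, two_mul] using this
  have hb : 0 ≤ b := by
    have := cp_nonneg h2 1 1
    simpa [Matrix.add_apply, Matrix.mul_apply, Matrix.vecMul, dotProduct,
      Matrix.transpose_apply, Fin.sum_univ_two, two_mul] using this
  have hcn : 0 ≤ c := by
    have := cp_nonneg h1 1 0
    simpa [Matrix.add_apply, Matrix.mul_apply, Matrix.vecMul, dotProduct,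
      Matrix.transpose_apply, Fin.sum_univ_two] using this
  have hdn : 0 ≤ d := by
    have := cp_nonneg h2 0 1
    simpa [Matrix.add_apply, Matrix.mul_apply, Matrix.vecMul, dotProduct,
      Matrix.transpose_apply, Fin.sum_univ_two] using this
  -- c = 0
  have hc0 : c = 0 := by
    have := cp_psd h1 ![-c, a + c^2 + 1]
    simp only [dotProduct, Matrix.mulVec, Matrix.add_apply, Matrix.mul_apply,
      Matrix.transpose_apply, Fin.sum_univ_two, Matrix.cons_val_zero, Matrix.cons_val_one,
      Matrix.head_cons, Matrix.cons_val', Matrix.empty_val', Matrix.cons_val_fin_one,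
      Matrix.of_apply, Matrix.head_fin_const] at this
    norm_num at this
    nlinarith [sq_nonneg c, ha]
  have hd0 : d = 0 := by
    have := cp_psd h2 ![b + d^2 + 1, -d]
    simp only [dotProduct, Matrix.mulVec, Matrix.add_apply, Matrix.mul_apply,
      Matrix.transpose_apply, Fin.sum_univ_two, Matrix.cons_val_zero, Matrix.cons_val_one,
      Matrix.head_cons, Matrix.cons_val', Matrix.empty_val', Matrix.cons_val_fin_one,
      Matrix.of_apply, Matrix.head_fin_const] at this
    norm_num at this
    nlinarith [sq_nonneg d, hb]
  -- a = b using J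
  have hab : a = b := by
    have hpos : (0:ℝ) < a + 1 := by linarith
    have := cp_psd h3 ![-1 - (b - a)/(a+1), 1]
    simp only [dotProduct, Matrix.mulVec, Matrix.add_apply, Matrix.mul_apply,
      Matrix.transpose_apply, Fin.sum_univ_two, Matrix.cons_val_zero, Matrix.cons_val_one,
      Matrix.head_cons, Matrix.cons_val', Matrix.empty_val', Matrix.cons_val_fin_one,
      Matrix.of_apply, Matrix.head_fin_const] at this
    norm_num at this
    rw [← ha', ← hb', ← hc', ← hd', hc0, hd0] at this
    set t := (b - a) / (a + 1) with ht'
    have heq : t * (a + 1) = b - a := by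
      rw [ht']; field_simp
    have ht2 : t ^ 2 ≤ 0 := by nlinarith [this, heq]
    have ht0 : t = 0 := by nlinarith [sq_nonneg t]
    rw [ht0] at heq; linarith
  have hA : A = a • (1 : Matrix (Fin 2) (Fin 2) ℝ) := by
    ext i j
    fin_cases i <;> fin_cases j <;>
      simp [Matrix.one_apply, hab, hc0, hd0, ← ha', ← hb', ← hc', ← hd']
  refine ⟨a, ha, hA, fun X _ => ?_⟩
  rw [hA]
  rw [Matrix.transpose_smul, Matrix.transpose_one, Matrix.smul_mul, Matrix.mul_smul,
    one_mul, mul_one, two_mul, add_smul]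
end

section
/- Let 𝓛_{A,B} : 𝒮² → 𝒮² be the generalized Lyapunov map 𝓛_{A,B}(X) = AXB + BᵗXAᵗ, where A, B ∈ M₂(ℝ) and B is invertible. If 𝓛_{A,B}(CP₂) ⊆ CP₂, then A = αBᵗ for some scalar α ≥ 0, so that 𝓛_{A,B}(X) = 2α BᵗXB for all X ∈ 𝒮²; in particular 𝓛_{A,B} is a standard map X ↦ RXRᵗ. -/
open Matrix

/-- If the quadratic form `x ↦ (a·x)(b·x)` is nonnegative on `ℝ²` and `b ≠ 0`,
then `a` is a nonnegative multiple of `b`. -/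
lemma aux_parallel (a0 a1 b0 b1 : ℝ) (hs : 0 < b0^2 + b1^2)
    (hyp : ∀ x0 x1 : ℝ, 0 ≤ (a0*x0 + a1*x1) * (b0*x0 + b1*x1)) :
    ∃ l : ℝ, 0 ≤ l ∧ a0 = l * b0 ∧ a1 = l * b1 := by
  have hd : 0 ≤ a0*b0 + a1*b1 := by nlinarith [hyp b0 b1]
  set d : ℝ := a0*b0 + a1*b1 with hddef
  set c : ℝ := a0*b1 - a1*b0 with hcdef
  have hd1 : (0:ℝ) < d + 1 := by linarith
  set t : ℝ := -c / (d+1) with htdef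
  have ht : t * (d+1) = -c := by
    rw [htdef]; field_simp
  have h2 := hyp (b1 + t*b0) (-b0 + t*b1)
  have hfac : (a0*(b1+t*b0) + a1*(-b0+t*b1)) = -t := by
    have h' : a0*(b1+t*b0) + a1*(-b0+t*b1) = c + t*d := by ring
    rw [h']; linarith [ht]
  have hfac2 : (b0*(b1+t*b0) + b1*(-b0+t*b1)) = t*(b0^2+b1^2) := by ring
  rw [hfac, hfac2] at h2
  have htt : t * t ≤ 0 := by nlinarith
  have ht0 : t = 0 := by
    have := mul_self_nonneg t
    have : t * t = 0 := le_antisymm htt this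
    exact mul_self_eq_zero.mp this
  have hc0 : c = 0 := by rw [ht0] at ht; linarith
  refine ⟨d / (b0^2 + b1^2), div_nonneg hd (le_of_lt hs), ?_, ?_⟩
  · rw [div_mul_eq_mul_div, eq_div_iff (ne_of_gt hs)]
    linear_combination b1 * hc0
  · rw [div_mul_eq_mul_div, eq_div_iff (ne_of_gt hs)]
    linear_combination (-b0) * hc0

theorem stmt_6 (A B : Matrix (Fin 2) (Fin 2) ℝ) (hB : IsUnit B)
    (h : ∀ X ∈ CPset 2, A * X * B + Bᵀ * X * Aᵀ ∈ CPset 2) :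
    ∃ α : ℝ, 0 ≤ α ∧ A = α • Bᵀ ∧
      (∀ X : Matrix (Fin 2) (Fin 2) ℝ, X.IsSymm →
        A * X * B + Bᵀ * X * Aᵀ = (2 * α) • (Bᵀ * X * B)) ∧
      ∃ R : Matrix (Fin 2) (Fin 2) ℝ, ∀ X : Matrix (Fin 2) (Fin 2) ℝ, X.IsSymm →
        A * X * B + Bᵀ * X * Aᵀ = R * X * Rᵀ := by
  have hdu : IsUnit B.det := (Matrix.isUnit_iff_isUnit_det B).mp hB
  have hd : B.det ≠ 0 := hdu.ne_zero
  rw [Matrix.det_fin_two] at hd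
  -- Key: for every entrywise-nonnegative v, the quadratic form x ↦ (Av·x)(Bᵀv·x) is nonneg
  have key : ∀ v0 v1 : ℝ, 0 ≤ v0 → 0 ≤ v1 → ∀ x0 x1 : ℝ,
      0 ≤ ((A 0 0*v0 + A 0 1*v1)*x0 + (A 1 0*v0 + A 1 1*v1)*x1) *
          ((B 0 0*v0 + B 1 0*v1)*x0 + (B 0 1*v0 + B 1 1*v1)*x1) := by
    intro v0 v1 hv0 hv1 x0 x1
    set X : Matrix (Fin 2) (Fin 2) ℝ := !![v0*v0, v0*v1; v1*v0, v1*v1] with hXdef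
    have hX : X ∈ CPset 2 := by
      refine ⟨1, !![v0; v1], ?_, ?_⟩
      · intro i j
        fin_cases i <;> fin_cases j <;> simpa
      · have hT : (!![v0; v1])ᵀ = !![v0, v1] := by
          ext i j; fin_cases i <;> fin_cases j <;> rfl
        rw [hT]
        ext i j
        fin_cases i <;> fin_cases j <;>
          simp [Matrix.mul_apply, Fin.sum_univ_one, hXdef]
    obtain ⟨m, C, hC, hM⟩ := h X hX
    have hq : 0 ≤ (![x0,x1]) ⬝ᵥ ((A * X * B + Bᵀ * X * Aᵀ) *ᵥ ![x0,x1]) := by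
      rw [hM, ← Matrix.mulVec_mulVec, Matrix.dotProduct_mulVec, ← Matrix.mulVec_transpose]
      exact Finset.sum_nonneg fun i _ => mul_self_nonneg _
    have he : (![x0,x1]) ⬝ᵥ ((A * X * B + Bᵀ * X * Aᵀ) *ᵥ ![x0,x1]) =
        2 * (((A 0 0*v0 + A 0 1*v1)*x0 + (A 1 0*v0 + A 1 1*v1)*x1) *
          ((B 0 0*v0 + B 1 0*v1)*x0 + (B 0 1*v0 + B 1 1*v1)*x1)) := by
      simp [dotProduct, Matrix.mulVec, Matrix.mul_apply, Fin.sum_univ_two, hXdef]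
      ring
    rw [he] at hq
    linarith
  -- nonvanishing of the relevant rows of B
  have hs0 : 0 < (B 0 0)^2 + (B 0 1)^2 := by
    rcases lt_or_ge 0 ((B 0 0)^2 + (B 0 1)^2) with h' | h'
    · exact h'
    · exfalso
      have h1 : B 0 0 = 0 := by nlinarith [sq_nonneg (B 0 0), sq_nonneg (B 0 1)]
      have h2 : B 0 1 = 0 := by nlinarith [sq_nonneg (B 0 0), sq_nonneg (B 0 1)]
      exact hd (by rw [h1, h2]; ring)
  have hs1 : 0 < (B 1 0)^2 + (B 1 1)^2 := by
    rcases lt_or_ge 0 ((B 1 0)^2 + (B 1 1)^2) with h' | h'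
    · exact h'
    · exfalso
      have h1 : B 1 0 = 0 := by nlinarith [sq_nonneg (B 1 0), sq_nonneg (B 1 1)]
      have h2 : B 1 1 = 0 := by nlinarith [sq_nonneg (B 1 0), sq_nonneg (B 1 1)]
      exact hd (by rw [h1, h2]; ring)
  have hs2 : 0 < (B 0 0 + B 1 0)^2 + (B 0 1 + B 1 1)^2 := by
    rcases lt_or_ge 0 ((B 0 0 + B 1 0)^2 + (B 0 1 + B 1 1)^2) with h' | h'
    · exact h'
    · exfalso
      have h1 : B 0 0 + B 1 0 = 0 := by
        nlinarith [sq_nonneg (B 0 0 + B 1 0), sq_nonneg (B 0 1 + B 1 1)]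
      have h2 : B 0 1 + B 1 1 = 0 := by
        nlinarith [sq_nonneg (B 0 0 + B 1 0), sq_nonneg (B 0 1 + B 1 1)]
      exact hd (by linear_combination B 0 0 * h2 - B 0 1 * h1)
  obtain ⟨l0, hl0, e00, e10⟩ := aux_parallel (A 0 0) (A 1 0) (B 0 0) (B 0 1) hs0
    (fun x0 x1 => by simpa using key 1 0 zero_le_one le_rfl x0 x1)
  obtain ⟨l1, hl1, e01, e11⟩ := aux_parallel (A 0 1) (A 1 1) (B 1 0) (B 1 1) hs1
    (fun x0 x1 => by simpa using key 0 1 le_rfl zero_le_one x0 x1)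
  obtain ⟨l2, hl2, e20, e21⟩ := aux_parallel (A 0 0 + A 0 1) (A 1 0 + A 1 1)
    (B 0 0 + B 1 0) (B 0 1 + B 1 1) hs2
    (fun x0 x1 => by
      have h' := key 1 1 zero_le_one zero_le_one x0 x1
      have heq : ((A 0 0*1 + A 0 1*1)*x0 + (A 1 0*1 + A 1 1*1)*x1) *
          ((B 0 0*1 + B 1 0*1)*x0 + (B 0 1*1 + B 1 1*1)*x1) =
          ((A 0 0 + A 0 1)*x0 + (A 1 0 + A 1 1)*x1) *
          ((B 0 0 + B 1 0)*x0 + (B 0 1 + B 1 1)*x1) := by ring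
      linarith [h', heq.symm.le, heq.le])
  have R1 : l0 * B 0 0 + l1 * B 1 0 = l2 * (B 0 0 + B 1 0) := by
    linear_combination e20 - e00 - e01
  have R2 : l0 * B 0 1 + l1 * B 1 1 = l2 * (B 0 1 + B 1 1) := by
    linear_combination e21 - e10 - e11
  have hl02 : (l0 - l2) * (B 0 0 * B 1 1 - B 0 1 * B 1 0) = 0 := by
    linear_combination B 1 1 * R1 - B 1 0 * R2
  have hl12 : (l2 - l1) * (B 0 0 * B 1 1 - B 0 1 * B 1 0) = 0 := by
    linear_combination B 0 1 * R1 - B 0 0 * R2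
  have h02 : l0 = l2 := by
    rcases mul_eq_zero.mp hl02 with h' | h'
    · linarith
    · exact absurd h' hd
  have h12 : l2 = l1 := by
    rcases mul_eq_zero.mp hl12 with h' | h'
    · linarith
    · exact absurd h' hd
  have hl10 : l1 = l0 := by linarith
  have e01' : A 0 1 = l0 * B 1 0 := by rw [e01, hl10]
  have e11' : A 1 1 = l0 * B 1 1 := by rw [e11, hl10]
  have hA : A = l0 • Bᵀ := by
    ext i j
    fin_cases i <;> fin_cases j <;>
      simp only [Matrix.smul_apply, Matrix.transpose_apply, smul_eq_mul, Fin.isValue]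
    · exact e00
    · exact e01'
    · exact e10
    · exact e11'
  have hmain : ∀ X : Matrix (Fin 2) (Fin 2) ℝ, X.IsSymm →
      A * X * B + Bᵀ * X * Aᵀ = (2 * l0) • (Bᵀ * X * B) := by
    intro X _
    rw [hA, Matrix.transpose_smul, Matrix.transpose_transpose]
    rw [Matrix.smul_mul, Matrix.smul_mul, Matrix.mul_smul]
    rw [two_mul, add_smul]
  refine ⟨l0, hl0, hA, hmain, ⟨Real.sqrt (2 * l0) • Bᵀ, ?_⟩⟩
  intro X hX
  rw [hmain X hX, Matrix.transpose_smul, Matrix.transpose_transpose]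
  rw [Matrix.smul_mul, Matrix.smul_mul, Matrix.mul_smul, smul_smul,
    Real.mul_self_sqrt (by linarith : (0:ℝ) ≤ 2 * l0)]
end

section
/- Let L be an invertible linear map on 𝒮ⁿ with L(CPₙ) ⊆ CPₙ. If L is a standard map (L(X) = RXRᵗ for some fixed R ∈ Mₙ(ℝ)), then there exist matrices A₁, B₁ ∈ Mₙ(ℝ) with A₁ entrywise nonnegative and B₁ = A₁ᵗ/2 such that L(X) = A₁XB₁ + B₁ᵗXA₁ᵗ for all X. Conversely, for n ≤ 4, if L(X) = AXB + BᵗXAᵗ for some A, B ∈ Mₙ(ℝ) with B invertible, then L is a standard map. -/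
/-!
A standard map sends `x xᵀ` to `(R x)(R x)ᵀ`, so if it preserves `CPₙ` then `R x` has entries of
one sign for every `x ≥ 0`. If `R` had a column with a negative entry and another with a positive
entry, the nonnegative combination of the two whose image has entry sum zero would lie in the
kernel of `R`, contradicting injectivity; so `R` or `-R` is nonnegative, and `A₁ = ±R` works.

For the converse, `L (x xᵀ) = u vᵀ + v uᵀ` with `u = A x`, `v = Bᵀ x` is positive semidefinite, i.e.
`(z ⬝ u)(z ⬝ v) ≥ 0` for all `z`, which forces `u` to be a nonnegative multiple of `v`. Testing
`x = eᵢ` and `x = eᵢ + eⱼ` gives `A = c Bᵀ` with `c ≥ 0`, and then `R = √(2c) Bᵀ`.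
-/

open Matrix

/-- The space `𝒮ⁿ` of `n × n` real symmetric matrices, as a submodule of the matrices. -/
def SymMat (n : ℕ) : Submodule ℝ (Matrix (Fin n) (Fin n) ℝ) where
  carrier := {A | A.IsSymm}
  add_mem' ha hb := ha.add hb
  zero_mem' := Matrix.isSymm_zero
  smul_mem' c A hA := hA.smul c

/-- The cone `CPₙ` of completely positive matrices in `𝒮ⁿ`. -/
def CPcone (n : ℕ) : Set (SymMat n) :=
  {A | ∃ (m : ℕ) (B : Matrix (Fin n) (Fin m) ℝ), (∀ i j, 0 ≤ B i j) ∧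
    (A : Matrix (Fin n) (Fin n) ℝ) = B * Bᵀ}

section SignedVectors

variable {ι : Type*}

lemma nonneg_or_nonpos_of_forall_mul_nonneg {y : ι → ℝ} (h : ∀ k l, 0 ≤ y k * y l) :
    0 ≤ y ∨ y ≤ 0 := by
  by_contra! hy
  obtain ⟨⟨k, hk⟩, ⟨l, hl⟩⟩ : (∃ k, y k < 0) ∧ ∃ l, 0 < y l := by
    simpa [Pi.le_def] using hy
  nlinarith [h k l]

variable [Fintype ι]

lemma eq_zero_of_sum_eq_zero_of_nonneg_or_nonpos {y : ι → ℝ} (hy : 0 ≤ y ∨ y ≤ 0)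
    (hsum : ∑ k, y k = 0) : y = 0 := by
  funext k
  rcases hy with hy | hy
  · exact (Finset.sum_eq_zero_iff_of_nonneg fun k _ => hy k).mp hsum k (Finset.mem_univ k)
  · exact (Finset.sum_eq_zero_iff_of_nonpos fun k _ => hy k).mp hsum k (Finset.mem_univ k)

end SignedVectors

theorem Matrix.nonneg_or_nonpos_of_mulVec_nonneg_or_nonpos {m n : Type*} [Fintype m]
    [Fintype n] {R : Matrix m n ℝ} (hR : Function.Injective R.mulVec)
    (h : ∀ x, 0 ≤ x → 0 ≤ R *ᵥ x ∨ R *ᵥ x ≤ 0) : (∀ i j, 0 ≤ R i j) ∨ ∀ i j, R i j ≤ 0 := by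
  classical
  by_contra! hmixed
  obtain ⟨⟨p, i, hpi⟩, ⟨q, j, hqj⟩⟩ := hmixed
  let e : n → n → ℝ := fun k => Pi.single k 1
  have he : ∀ k l, 0 ≤ e k l := fun k => (Pi.single_nonneg.mpr zero_le_one : 0 ≤ e k)
  have hcol : ∀ k, R *ᵥ e k = R.col k := fun k => mulVec_single_one R k
  have hi : R *ᵥ e i ≤ 0 :=
    (h _ (he i ·)).resolve_left fun hn => (hpi.trans_le (by simpa [hcol] using hn p)).false
  have hj : 0 ≤ R *ᵥ e j :=
    (h _ (he j ·)).resolve_right fun hn => (hqj.trans_le (by simpa [hcol] using hn q)).false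
  set a := ∑ k, (R *ᵥ e i) k
  set b := ∑ k, (R *ᵥ e j) k
  have ha : a < 0 := Finset.sum_neg' (fun k _ => hi k) ⟨p, Finset.mem_univ p, by simpa [hcol]⟩
  have hb : 0 < b := Finset.sum_pos' (fun k _ => hj k) ⟨q, Finset.mem_univ q, by simpa [hcol]⟩
  set z := b • e i - a • e j
  have hz : 0 ≤ z := fun k => by
    simp only [z, Pi.sub_apply, Pi.smul_apply, smul_eq_mul, Pi.zero_apply]
    nlinarith [he i k, he j k]
  have hRz : R *ᵥ z = 0 := by
    refine eq_zero_of_sum_eq_zero_of_nonneg_or_nonpos (h z hz) ?_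
    simp only [z, mulVec_sub, mulVec_smul, Pi.sub_apply, Pi.smul_apply, smul_eq_mul,
      Finset.sum_sub_distrib, ← Finset.mul_sum]
    ring
  have hzi := congrFun (hR (hRz.trans (mulVec_zero R).symm)) i
  simp only [z, Pi.sub_apply, Pi.smul_apply, smul_eq_mul, Pi.zero_apply] at hzi
  rw [show e i i = 1 from Pi.single_eq_same i 1] at hzi
  nlinarith [he j i]

lemma Matrix.isSymm_vecMulVec_self {α n : Type*} [CommMagma α] (x : n → α) :
    (vecMulVec x x).IsSymm :=
  transpose_vecMulVec x x

namespace SymMat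

def rankOne {n : ℕ} (x : Fin n → ℝ) : SymMat n := ⟨vecMulVec x x, isSymm_vecMulVec_self x⟩

@[simp]
lemma coe_rankOne {n : ℕ} (x : Fin n → ℝ) :
    (rankOne x : Matrix (Fin n) (Fin n) ℝ) = vecMulVec x x := rfl

lemma rankOne_eq_zero_iff {n : ℕ} {x : Fin n → ℝ} : rankOne x = 0 ↔ x = 0 := by
  rw [← Subtype.coe_inj, coe_rankOne, Submodule.coe_zero, vecMulVec_eq_zero, or_self]

end SymMat

namespace CPcone

variable {n : ℕ} {A : SymMat n}

lemma rankOne_mem {x : Fin n → ℝ} (hx : 0 ≤ x) : SymMat.rankOne x ∈ CPcone n :=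
  ⟨1, replicateCol (Fin 1) x, fun i _ => hx i, by
    rw [SymMat.coe_rankOne, transpose_replicateCol]; exact vecMulVec_eq (Fin 1) x x⟩

lemma nonneg_apply (hA : A ∈ CPcone n) (k l : Fin n) : 0 ≤ (A : Matrix (Fin n) (Fin n) ℝ) k l := by
  obtain ⟨m, B, hB, hAB⟩ := hA
  rw [hAB, mul_apply]
  exact Finset.sum_nonneg fun a _ => mul_nonneg (hB k a) (hB l a)

lemma posSemidef (hA : A ∈ CPcone n) : (A : Matrix (Fin n) (Fin n) ℝ).PosSemidef := by
  obtain ⟨m, B, -, hAB⟩ := hA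
  simpa [hAB, conjTranspose_eq_transpose_of_trivial] using posSemidef_self_mul_conjTranspose B

end CPcone

theorem exists_nonneg_conj_of_eq_conj {n : ℕ} {L : SymMat n →ₗ[ℝ] SymMat n}
    (hinj : Function.Injective L) (hL : ∀ X ∈ CPcone n, L X ∈ CPcone n)
    {R : Matrix (Fin n) (Fin n) ℝ}
    (hR : ∀ X : SymMat n, (L X : Matrix (Fin n) (Fin n) ℝ) = R * X * Rᵀ) :
    ∃ A : Matrix (Fin n) (Fin n) ℝ, (∀ i j, 0 ≤ A i j) ∧
      ∀ X : SymMat n, (L X : Matrix (Fin n) (Fin n) ℝ) = A * X * Aᵀ := by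
  have hLrankOne : ∀ x, (L (SymMat.rankOne x) : Matrix (Fin n) (Fin n) ℝ) =
      vecMulVec (R *ᵥ x) (R *ᵥ x) := fun x => by
    rw [hR, SymMat.coe_rankOne, mul_vecMulVec, vecMulVec_mul, vecMul_transpose]
  have hRinj : Function.Injective R.mulVec := (injective_iff_map_eq_zero R.mulVecLin).mpr
    fun v hv => SymMat.rankOne_eq_zero_iff.mp <| (map_eq_zero_iff L hinj).mp <|
      Subtype.ext <| by simp [hLrankOne, show R *ᵥ v = 0 from hv]
  have hsigned : ∀ x, 0 ≤ x → 0 ≤ R *ᵥ x ∨ R *ᵥ x ≤ 0 := fun x hx =>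
    nonneg_or_nonpos_of_forall_mul_nonneg fun k l => by
      simpa [hLrankOne, vecMulVec_apply] using
        CPcone.nonneg_apply (hL _ (CPcone.rankOne_mem hx)) k l
  rcases nonneg_or_nonpos_of_mulVec_nonneg_or_nonpos hRinj hsigned with hpos | hneg
  · exact ⟨R, hpos, hR⟩
  · exact ⟨-R, fun i j => neg_nonneg.mpr (hneg i j), by simpa using hR⟩

section Collinear

variable {ι : Type*} [Fintype ι] {u v : ι → ℝ}

lemma dotProduct_mul_dotProduct_comm_of_forall_mul_nonneg
    (h : ∀ z, 0 ≤ (z ⬝ᵥ u) * (z ⬝ᵥ v)) (z w : ι → ℝ) :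
    (z ⬝ᵥ u) * (w ⬝ᵥ v) = (w ⬝ᵥ u) * (z ⬝ᵥ v) := by
  -- `t ↦ ((z + t w) ⬝ u) ((z + t w) ⬝ v)` is a nonnegative quadratic whose discriminant is the
  -- square of the difference of the two sides.
  have hdisc := discrim_le_zero (K := ℝ) (a := (w ⬝ᵥ u) * (w ⬝ᵥ v))
    (b := (z ⬝ᵥ u) * (w ⬝ᵥ v) + (w ⬝ᵥ u) * (z ⬝ᵥ v)) (c := (z ⬝ᵥ u) * (z ⬝ᵥ v)) fun t => by
      have := h (z + t • w)
      simp only [add_dotProduct, smul_dotProduct, smul_eq_mul] at this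
      linarith
  have hsq : ((z ⬝ᵥ u) * (w ⬝ᵥ v) - (w ⬝ᵥ u) * (z ⬝ᵥ v)) ^ 2 ≤ 0 := by
    rw [discrim] at hdisc
    linarith
  exact sub_eq_zero.mp (pow_eq_zero_iff two_ne_zero |>.mp (le_antisymm hsq (sq_nonneg _)))

lemma exists_nonneg_smul_of_forall_dotProduct_mul_nonneg (hv : v ≠ 0)
    (h : ∀ z, 0 ≤ (z ⬝ᵥ u) * (z ⬝ᵥ v)) : ∃ c : ℝ, 0 ≤ c ∧ u = c • v := by
  classical
  have hvv : 0 < v ⬝ᵥ v := lt_of_le_of_ne (Finset.sum_nonneg fun i _ => mul_self_nonneg (v i))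
    (Ne.symm (dotProduct_self_eq_zero.not.mpr hv))
  refine ⟨(v ⬝ᵥ u) / (v ⬝ᵥ v), div_nonneg (nonneg_of_mul_nonneg_left (h v) hvv) hvv.le,
    funext fun k => ?_⟩
  have hk := dotProduct_mul_dotProduct_comm_of_forall_mul_nonneg h (Pi.single k 1) v
  rw [single_one_dotProduct, single_one_dotProduct] at hk
  rw [Pi.smul_apply, smul_eq_mul, div_mul_eq_mul_div, eq_div_iff hvv.ne']
  linarith

end Collinear

theorem Matrix.exists_eq_smul_of_forall_mulVec_eq_smul {m n : Type*} [Fintype n]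
    {A M : Matrix m n ℝ} (hM : Function.Injective M.mulVec)
    (h : ∀ x : n → ℝ, 0 ≤ x → x ≠ 0 → ∃ c : ℝ, 0 ≤ c ∧ A *ᵥ x = c • M *ᵥ x) :
    ∃ c : ℝ, 0 ≤ c ∧ A = c • M := by
  classical
  let e : n → n → ℝ := fun k => Pi.single k 1
  have he : ∀ k, 0 ≤ e k := fun k => Pi.single_nonneg.mpr zero_le_one
  choose c hc0 hc using fun i => h (e i) (he i) (Pi.single_ne_zero_iff.mpr one_ne_zero)
  have hconst : ∀ i j, c i = c j := by
    intro i j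
    rcases eq_or_ne i j with rfl | hij
    · rfl
    obtain ⟨c', -, hc'⟩ := h (e i + e j) (add_nonneg (he i) (he j)) fun h0 => by
      simpa [e, hij] using congrFun h0 i
    rw [mulVec_add, mulVec_add, hc i, hc j] at hc'
    have hker : M *ᵥ ((c i - c') • e i + (c j - c') • e j) = M *ᵥ 0 := by
      rw [mulVec_add, mulVec_smul, mulVec_smul, mulVec_zero]
      linear_combination (norm := module) hc'
    have hi : c i = c' := by simpa [e, hij, sub_eq_zero] using congrFun (hM hker) i
    have hj : c j = c' := by simpa [e, hij.symm, sub_eq_zero] using congrFun (hM hker) j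
    rw [hi, hj]
  rcases isEmpty_or_nonempty n with hn | ⟨⟨i₀⟩⟩
  · exact ⟨0, le_rfl, ext fun _ j => isEmptyElim j⟩
  refine ⟨c i₀, hc0 i₀, ext fun k j => ?_⟩
  simpa [e, mulVec_single_one, hconst j i₀] using congrFun (hc j) k

lemma Matrix.mul_vecMulVec_mul_add {n : Type*} [Fintype n] (A B : Matrix n n ℝ) (x : n → ℝ) :
    A * vecMulVec x x * B + Bᵀ * vecMulVec x x * Aᵀ =
      vecMulVec (A *ᵥ x) (Bᵀ *ᵥ x) + vecMulVec (Bᵀ *ᵥ x) (A *ᵥ x) := by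
  rw [mul_vecMulVec, vecMulVec_mul, mul_vecMulVec, vecMulVec_mul, vecMul_transpose,
    mulVec_transpose]

lemma Matrix.dotProduct_vecMulVec_add_mulVec {n : Type*} [Fintype n] (u v z : n → ℝ) :
    z ⬝ᵥ ((vecMulVec u v + vecMulVec v u) *ᵥ z) = 2 * ((z ⬝ᵥ u) * (z ⬝ᵥ v)) := by
  rw [add_mulVec, vecMulVec_mulVec, vecMulVec_mulVec, op_smul_eq_smul, op_smul_eq_smul,
    dotProduct_add, dotProduct_smul, dotProduct_smul, smul_eq_mul, smul_eq_mul,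
    dotProduct_comm v z, dotProduct_comm u z]
  ring

theorem exists_eq_conj_of_eq_symmetrized {n : ℕ} {L : SymMat n →ₗ[ℝ] SymMat n}
    (hL : ∀ X ∈ CPcone n, L X ∈ CPcone n) {A B : Matrix (Fin n) (Fin n) ℝ} (hB : IsUnit B)
    (hAB : ∀ X : SymMat n, (L X : Matrix (Fin n) (Fin n) ℝ) = A * X * B + Bᵀ * X * Aᵀ) :
    ∃ R : Matrix (Fin n) (Fin n) ℝ,
      ∀ X : SymMat n, (L X : Matrix (Fin n) (Fin n) ℝ) = R * X * Rᵀ := by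
  have hBinj : Function.Injective Bᵀ.mulVec :=
    mulVec_injective_iff_isUnit.mpr ((isUnit_transpose B).mpr hB)
  obtain ⟨c, hc, rfl⟩ : ∃ c : ℝ, 0 ≤ c ∧ A = c • Bᵀ :=
    exists_eq_smul_of_forall_mulVec_eq_smul hBinj fun x hx hx0 => by
      refine exists_nonneg_smul_of_forall_dotProduct_mul_nonneg
        (fun h0 => hx0 (hBinj (h0.trans (mulVec_zero _).symm))) fun z => ?_
      have hpsd := (CPcone.posSemidef (hL _ (CPcone.rankOne_mem hx))).dotProduct_mulVec_nonneg z
      rw [hAB, SymMat.coe_rankOne, mul_vecMulVec_mul_add, star_trivial,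
        dotProduct_vecMulVec_add_mulVec] at hpsd
      linarith
  refine ⟨√(2 * c) • Bᵀ, fun X => ?_⟩
  simp only [hAB, transpose_smul, transpose_transpose, smul_mul, Matrix.mul_smul, smul_smul,
    Real.mul_self_sqrt (by positivity : 0 ≤ 2 * c)]
  module

theorem stmt_7 {n : ℕ} (L : SymMat n →ₗ[ℝ] SymMat n) (hinv : Function.Bijective L)
    (hL : ∀ X ∈ CPcone n, L X ∈ CPcone n) :
    ((∃ R : Matrix (Fin n) (Fin n) ℝ, ∀ X : SymMat n,
        (L X : Matrix (Fin n) (Fin n) ℝ) = R * (X : Matrix (Fin n) (Fin n) ℝ) * Rᵀ) →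
      ∃ A₁ B₁ : Matrix (Fin n) (Fin n) ℝ, (∀ i j, 0 ≤ A₁ i j) ∧ B₁ = (2 : ℝ)⁻¹ • A₁ᵀ ∧
        ∀ X : SymMat n, (L X : Matrix (Fin n) (Fin n) ℝ) =
          A₁ * (X : Matrix (Fin n) (Fin n) ℝ) * B₁ + B₁ᵀ * (X : Matrix (Fin n) (Fin n) ℝ) * A₁ᵀ) ∧
    (n ≤ 4 →
      (∃ A B : Matrix (Fin n) (Fin n) ℝ, IsUnit B ∧
        ∀ X : SymMat n, (L X : Matrix (Fin n) (Fin n) ℝ) =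
          A * (X : Matrix (Fin n) (Fin n) ℝ) * B + Bᵀ * (X : Matrix (Fin n) (Fin n) ℝ) * Aᵀ) →
      ∃ R : Matrix (Fin n) (Fin n) ℝ, ∀ X : SymMat n,
        (L X : Matrix (Fin n) (Fin n) ℝ) = R * (X : Matrix (Fin n) (Fin n) ℝ) * Rᵀ) := by
  constructor
  · rintro ⟨R, hR⟩
    obtain ⟨A, hA, hLA⟩ := exists_nonneg_conj_of_eq_conj hinv.injective hL hR
    refine ⟨A, (2 : ℝ)⁻¹ • Aᵀ, hA, rfl, fun X => ?_⟩
    simp only [hLA, transpose_smul, transpose_transpose, smul_mul, Matrix.mul_smul]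
    module
  · rintro - ⟨A, B, hB, hAB⟩
    exact exists_eq_conj_of_eq_symmetrized hL hB hAB
end

section
/- A matrix A ∈ Mₙ(ℝ) is ℝⁿ₊-semipositive (i.e., there exists an entrywise positive vector x with Ax entrywise positive) if and only if A = Y X⁻¹ for some entrywise positive matrices X, Y ∈ Mₙ(ℝ) with X invertible. -/
open Matrix

theorem stmt_13 {n : ℕ} (A : Matrix (Fin n) (Fin n) ℝ) :
    (∃ x : Fin n → ℝ, (∀ i, 0 < x i) ∧ ∀ i, 0 < (A *ᵥ x) i) ↔
      ∃ X Y : Matrix (Fin n) (Fin n) ℝ,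
        (∀ i j, 0 < X i j) ∧ (∀ i j, 0 < Y i j) ∧ IsUnit X ∧ A = Y * X⁻¹ := by
  constructor
  · rintro ⟨x, hx, hAx⟩
    rcases Nat.eq_zero_or_pos n with hn | hn
    · subst hn
      exact ⟨1, 1, fun i => i.elim0, fun i => i.elim0, isUnit_one, Subsingleton.elim _ _⟩
    have hne : Nonempty (Fin n) := ⟨⟨0, hn⟩⟩
    -- choose ε
    set b : ℝ := Finset.univ.inf' Finset.univ_nonempty (fun i => (A *ᵥ x) i) with hb
    have hbpos : 0 < b := by
      rw [hb]
      exact (Finset.lt_inf'_iff _).2 fun i _ => hAx i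
    set M : ℝ := Finset.univ.sup' Finset.univ_nonempty
      (fun p : Fin n × Fin n => |A p.1 p.2|) with hM
    have hMnn : 0 ≤ M := by
      rw [hM]
      obtain ⟨i0⟩ := hne
      exact le_trans (abs_nonneg (A i0 i0))
        (Finset.le_sup' (fun p : Fin n × Fin n => |A p.1 p.2|) (Finset.mem_univ (i0, i0)))
    set ε : ℝ := b / (M + 1) with hε
    have hεpos : 0 < ε := div_pos hbpos (by linarith)
    have key : ∀ i j, 0 < (A *ᵥ x) i + ε * A i j := by
      intro i j
      have h1 : b ≤ (A *ᵥ x) i := Finset.inf'_le _ (Finset.mem_univ i)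
      have h2 : |A i j| ≤ M := by
        rw [hM]
        exact Finset.le_sup' (fun p : Fin n × Fin n => |A p.1 p.2|) (Finset.mem_univ (i, j))
      have h3 : -(|A i j|) ≤ A i j := neg_abs_le _
      have h4 : ε * M < b := by
        rw [hε, div_mul_eq_mul_div, div_lt_iff₀ (by linarith)]
        nlinarith
      nlinarith [mul_le_mul_of_nonneg_left h2 hεpos.le,
        mul_le_mul_of_nonneg_left h3 hεpos.le]
    set X : Matrix (Fin n) (Fin n) ℝ :=
      Matrix.of (fun i j => x i + if i = j then ε else 0) with hX
    have hXpos : ∀ i j, 0 < X i j := by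
      intro i j
      simp only [hX, Matrix.of_apply]
      split <;> [linarith [hx i, hεpos]; simpa using hx i]
    have hXunit : IsUnit X := by
      rw [← Matrix.mulVec_injective_iff_isUnit]
      intro v w hvw
      have hker : ∀ u : Fin n → ℝ, X *ᵥ u = 0 → u = 0 := by
        intro u hu
        have hs : ∀ i, x i * (∑ k, u k) + ε * u i = 0 := by
          intro i
          have h0 := congrFun hu i
          simp only [Matrix.mulVec, dotProduct, hX, Matrix.of_apply,
            Pi.zero_apply] at h0
          calc x i * (∑ k, u k) + ε * u i
              = (∑ k, x i * u k) + ∑ k, (if i = k then ε else 0) * u k := by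
                rw [Finset.mul_sum]
                congr 1
                simp [ite_mul, Finset.sum_ite_eq]
            _ = ∑ k, (x i + if i = k then ε else 0) * u k := by
                rw [← Finset.sum_add_distrib]
                exact Finset.sum_congr rfl (fun k _ => by ring)
            _ = 0 := h0
        have hxs : 0 < ∑ i, x i := Finset.sum_pos (fun i _ => hx i) Finset.univ_nonempty
        have hsum : (∑ i, x i) * (∑ k, u k) + ε * (∑ k, u k) = 0 := by
          have h : (∑ i, (x i * (∑ k, u k) + ε * u i)) = 0 := by simp [hs]
          rw [Finset.sum_add_distrib, ← Finset.sum_mul, ← Finset.mul_sum] at h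
          exact h
        have hS : (∑ k, u k) = 0 := by
          have hfac : ((∑ i, x i) + ε) * (∑ k, u k) = 0 := by linear_combination hsum
          rcases mul_eq_zero.1 hfac with h | h
          · exact absurd h (by positivity)
          · exact h
        funext i
        have := hs i
        rw [hS, mul_zero, zero_add] at this
        have : u i = 0 := (mul_eq_zero.1 this).resolve_left hεpos.ne'
        simpa using this
      have h0 : X *ᵥ (v - w) = 0 := by rw [Matrix.mulVec_sub, hvw, sub_self]
      exact sub_eq_zero.1 (hker _ h0)
    refine ⟨X, A * X, hXpos, ?_, hXunit, ?_⟩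
    · intro i j
      have : (A * X) i j = (A *ᵥ x) i + ε * A i j := by
        simp only [Matrix.mul_apply, hX, Matrix.of_apply, Matrix.mulVec, dotProduct,
          mul_add, Finset.sum_add_distrib, mul_ite, mul_zero, Finset.sum_ite_eq]
        simp [mul_comm]
      rw [this]; exact key i j
    · rw [Matrix.mul_assoc, Matrix.mul_nonsing_inv _ ((Matrix.isUnit_iff_isUnit_det X).1 hXunit), Matrix.mul_one]
  · rintro ⟨X, Y, hXpos, hYpos, hXunit, hA⟩
    refine ⟨X *ᵥ (fun _ => 1), ?_, ?_⟩
    · intro i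
      simp only [Matrix.mulVec, dotProduct, mul_one]
      exact Finset.sum_pos (fun j _ => hXpos i j) ⟨i, Finset.mem_univ i⟩
    · intro i
      have : A *ᵥ (X *ᵥ fun _ => 1) = Y *ᵥ (fun _ => 1) := by
        rw [Matrix.mulVec_mulVec, hA, Matrix.mul_assoc,
          Matrix.nonsing_inv_mul _ ((Matrix.isUnit_iff_isUnit_det X).1 hXunit), Matrix.mul_one]
      rw [this]
      simp only [Matrix.mulVec, dotProduct, mul_one]
      exact Finset.sum_pos (fun j _ => hYpos i j) ⟨i, Finset.mem_univ i⟩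
end

section
/- Let T : 𝒮ⁿ → ℝ^{n(n+1)/2} be the half-vectorization isomorphism sending a symmetric matrix A = (a_{ij}) to the vector of its entries (a_{ij})_{i ≤ j}, so that T maps 𝒩ⁿ₊ bijectively onto ℝ^{n(n+1)/2}₊. Then a linear map L on 𝒮ⁿ is 𝒩ⁿ₊-semipositive if and only if L = T⁻¹ (Y X⁻¹) T for some entrywise positive matrices X, Y ∈ M_{n(n+1)/2}(ℝ) with X invertible. -/
open Matrix

/-- The cone `𝒩ⁿ₊` of entrywise nonnegative matrices in `𝒮ⁿ`. -/
def Ncone (n : ℕ) : Set (SymMat n) :=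
  {A | ∀ i j, 0 ≤ (A : Matrix (Fin n) (Fin n) ℝ) i j}

/-- Interior of the nonnegative orthant in a finite product of reals. -/
lemma interior_orthant (m : ℕ) :
    interior {x : Fin (n * (n + 1) / 2) → ℝ | ∀ i, 0 ≤ x i} = {x | ∀ i, 0 < x i} := by
  have : {x : Fin (n * (n + 1) / 2) → ℝ | ∀ i, 0 ≤ x i} = Set.pi Set.univ (fun _ => Set.Ici 0) := by
    ext x
    constructor
    · intro h i _; exact h i
    · intro h i; exact h i (Set.mem_univ i)
  rw [this, interior_pi_set Set.finite_univ]
  ext x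
  constructor
  · intro h i; simpa [interior_Ici] using h i (Set.mem_univ i)
  · intro h i _; simpa [interior_Ici] using h i

theorem stmt_14 {n : ℕ} (T : SymMat n ≃ₗ[ℝ] (Fin (n * (n + 1) / 2) → ℝ))
    -- `T` is a half-vectorization: each coordinate of `T A` is the entry of `A` at a pair
    -- `(i, j)` with `i ≤ j`, each such pair occurring exactly once ...
    (hT : ∃ e : Fin (n * (n + 1) / 2) ≃ {p : Fin n × Fin n // p.1 ≤ p.2},
      ∀ (A : SymMat n) (k), T A k = (A : Matrix (Fin n) (Fin n) ℝ) ((e k : Fin n × Fin n).1)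
        ((e k : Fin n × Fin n).2))
    (hT' : T '' Ncone n = {x | ∀ i, 0 ≤ x i})
    (L : SymMat n →ₗ[ℝ] SymMat n) :
    (∃ A ∈ interior (Ncone n), L A ∈ interior (Ncone n)) ↔
      ∃ X Y : Matrix (Fin (n * (n + 1) / 2)) (Fin (n * (n + 1) / 2)) ℝ,
        (∀ i j, 0 < X i j) ∧ (∀ i j, 0 < Y i j) ∧ IsUnit X ∧
        ∀ A : SymMat n, L A = T.symm ((Y * X⁻¹) *ᵥ (T A)) := by
  clear hT
  have hm : 0 = 0 := rfl
  -- `T` as a homeomorphism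
  let h : SymMat n ≃L[ℝ] (Fin (n * (n + 1) / 2) → ℝ) := T.toContinuousLinearEquiv
  -- characterization of the interior of the cone
  have hNc : Ncone n = T ⁻¹' {x | ∀ i, 0 ≤ x i} := by
    rw [← hT', Set.preimage_image_eq _ T.injective]
  have hint : interior (Ncone n) = T ⁻¹' {x | ∀ i, 0 < x i} := by
    rw [hNc, ← interior_orthant (n * (n + 1) / 2)]
    exact (h.toHomeomorph.preimage_interior _).symm
  constructor
  · rintro ⟨A, hA, hLA⟩
    rw [hint, Set.mem_preimage] at hA hLA
    set x : Fin (n * (n + 1) / 2) → ℝ := T A with hx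
    -- the matrix of `T ∘ L ∘ T⁻¹`
    set M : Matrix (Fin (n * (n + 1) / 2)) (Fin (n * (n + 1) / 2)) ℝ :=
      LinearMap.toMatrix' (T.toLinearMap ∘ₗ L ∘ₗ T.symm.toLinearMap) with hM
    have hMv : ∀ B : SymMat n, M *ᵥ T B = T (L B) := by
      intro B
      have := Matrix.toLin'_toMatrix' (T.toLinearMap ∘ₗ L ∘ₗ T.symm.toLinearMap)
      calc M *ᵥ T B = Matrix.toLin' M (T B) := (Matrix.toLin'_apply _ _).symm
        _ = T (L B) := by rw [this]; simp
    have hMx : ∀ i, 0 < (M *ᵥ x) i := by rw [hMv A]; exact hLA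
    -- choose a small ε
    have hev : ∀ᶠ ε in nhdsWithin (0:ℝ) (Set.Ioi 0),
        ∀ i j, 0 < (M *ᵥ x) i + ε * M i j := by
      apply Filter.Eventually.filter_mono nhdsWithin_le_nhds
      rw [Filter.eventually_all]
      intro i
      rw [Filter.eventually_all]
      intro j
      have hc : ContinuousAt (fun ε : ℝ => (M *ᵥ x) i + ε * M i j) 0 := by fun_prop
      have h0 : (0:ℝ) < (M *ᵥ x) i + 0 * M i j := by simpa using hMx i
      exact hc.eventually (eventually_gt_nhds h0)
    obtain ⟨ε, hε, hεpos⟩ := (hev.and self_mem_nhdsWithin).exists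
    -- the matrices X and Y
    set X : Matrix (Fin (n * (n + 1) / 2)) (Fin (n * (n + 1) / 2)) ℝ :=
      Matrix.of fun i j => x i + ε * (if i = j then 1 else 0) with hX
    have hXv : ∀ v : Fin (n * (n + 1) / 2) → ℝ, ∀ i, (X *ᵥ v) i = x i * (∑ j, v j) + ε * v i := by
      intro v i
      simp only [hX, Matrix.mulVec, dotProduct, Matrix.of_apply, mul_add, add_mul,
        Finset.sum_add_distrib, mul_ite, mul_one, mul_zero, ite_mul, zero_mul,
        Finset.sum_ite_eq, Finset.mem_univ, if_true, ← Finset.mul_sum]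
    have hXunit : IsUnit X := by
      have hker : ¬ ∃ v ≠ 0, X *ᵥ v = 0 := by
        rintro ⟨v, hv, hXv0⟩
        apply hv
        set s : ℝ := ∑ j, v j with hs
        have key : ∀ i, ε * v i = - (x i * s) := by
          intro i
          have := congrFun hXv0 i
          rw [hXv v i] at this
          simp only [Pi.zero_apply] at this
          linarith
        have hsum : ε * s + (∑ i, x i) * s = 0 := by
          have h1 : ∑ i, ε * v i = ε * s := by rw [hs, Finset.mul_sum]
          have h2 : ∑ i, -(x i * s) = -((∑ i, x i) * s) := by
            rw [Finset.sum_mul, ← Finset.sum_neg_distrib]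
          have h3 : ∑ i : Fin (n * (n + 1) / 2), ε * v i
              = ∑ i : Fin (n * (n + 1) / 2), -(x i * s) :=
            Finset.sum_congr rfl fun i _ => key i
          rw [h1, h2] at h3
          linarith
        have hxsum : 0 ≤ ∑ i, x i := Finset.sum_nonneg fun i _ => (hA i).le
        have hs0 : s = 0 := by
          rcases eq_or_ne s 0 with h | h
          · exact h
          · exfalso
            have : (ε + ∑ i, x i) * s = 0 := by ring_nf; ring_nf at hsum; linarith
            rcases mul_eq_zero.mp this with h' | h'
            · linarith
            · exact h h'
        funext i
        have := key i
        rw [hs0, mul_zero, neg_zero] at this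
        have : v i = 0 := by
          have := mul_eq_zero.mp this
          rcases this with h | h
          · exact absurd h (ne_of_gt hεpos)
          · exact h
        simpa using this
      rw [Matrix.exists_mulVec_eq_zero_iff] at hker
      exact (Matrix.isUnit_iff_isUnit_det X).mpr (isUnit_iff_ne_zero.mpr hker)
    refine ⟨X, M * X, ?_, ?_, hXunit, ?_⟩
    · intro i j
      show (0:ℝ) < x i + ε * (if i = j then 1 else 0)
      rcases eq_or_ne i j with rfl | hij
      · rw [if_pos rfl, mul_one]; linarith [hA i, hεpos]
      · rw [if_neg hij, mul_zero, add_zero]; exact hA i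
    · intro i j
      have : (M * X) i j = (M *ᵥ x) i + ε * M i j := by
        simp only [hX, Matrix.mul_apply, Matrix.of_apply, Matrix.mulVec, dotProduct,
          mul_add, Finset.sum_add_distrib, mul_ite, mul_one, mul_zero,
          Finset.sum_ite_eq', Finset.mem_univ, if_true]
        ring
      rw [this]; exact hε i j
    · intro B
      have hdet : IsUnit X.det := (Matrix.isUnit_iff_isUnit_det X).mp hXunit
      have : M * X * X⁻¹ = M := Matrix.mul_nonsing_inv_cancel_right X M hdet
      rw [this, hMv B]
      simp
  · rintro ⟨X, Y, hXpos, hYpos, hXunit, hL⟩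
    have hdet : IsUnit X.det := (Matrix.isUnit_iff_isUnit_det X).mp hXunit
    set x : Fin (n * (n + 1) / 2) → ℝ := X *ᵥ (fun _ => 1) with hx
    have hxpos : ∀ i, 0 < x i := by
      intro i
      simp only [hx, Matrix.mulVec, dotProduct, mul_one]
      exact Finset.sum_pos (fun j _ => hXpos i j) ⟨i, Finset.mem_univ i⟩
    refine ⟨T.symm x, ?_, ?_⟩
    · rw [hint, Set.mem_preimage]
      simpa using hxpos
    · rw [hint, Set.mem_preimage, hL (T.symm x)]
      have h1 : T (T.symm ((Y * X⁻¹) *ᵥ T (T.symm x))) = (Y * X⁻¹) *ᵥ x := by simp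
      rw [h1]
      have h2 : (Y * X⁻¹) *ᵥ x = Y *ᵥ (fun _ => 1) := by
        rw [hx, Matrix.mulVec_mulVec, Matrix.nonsing_inv_mul_cancel_right X Y hdet]
      rw [h2]
      intro i
      simp only [Matrix.mulVec, dotProduct, mul_one]
      exact Finset.sum_pos (fun j _ => hYpos i j) ⟨i, Finset.mem_univ i⟩
end
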